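/- Let R be a commutative Noetherian ring graded by ℕ (or ℤ), let M be a graded R-module, and let X be any subset of Ass_R(M). Then there exists a graded submodule N of M (i.e. a submodule containing all homogeneous components of each of its elements) such that Ass_R(M/N) = X and Ass_R(N) = Ass_R(M) \ X. -/

import Mathlib

/-!
By Zorn's lemma there is a graded submodule `N` maximal among those with `Ass N ∩ X = ∅`.
If some `p ∈ Ass (M ⧸ N)` were outside `X`, then, `N` being graded, `p = (N : y)` for a
homogeneous `y` (a lowest-degree argument), and `N + R y` would be a larger graded submodule
with `Ass (N + R y) ⊆ Ass N ∪ {p}`. Hence `Ass (M ⧸ N) ⊆ X`, and both equalities follow from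
`Ass N ⊆ Ass M ⊆ Ass N ∪ Ass (M ⧸ N)`.
-/

open Submodule DirectSum

section AssociatedPrimes

variable {R M : Type*} [CommRing R] [AddCommGroup M] [Module R M]

theorem associatedPrimes_subset_union_quotient (N : Submodule R M) :
    associatedPrimes R M ⊆ associatedPrimes R N ∪ associatedPrimes R (M ⧸ N) :=
  associatedPrimes.subset_union_of_exact N.injective_subtype (LinearMap.exact_subtype_mkQ N)

theorem associatedPrimes_eq_of_disjoint_of_quotient_subset {N : Submodule R M}
    {X : Set (Ideal R)} (hX : X ⊆ associatedPrimes R M) (hN : Disjoint (associatedPrimes R N) X)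
    (hQ : associatedPrimes R (M ⧸ N) ⊆ X) :
    associatedPrimes R (M ⧸ N) = X ∧ associatedPrimes R N = associatedPrimes R M \ X := by
  have hsplit := associatedPrimes_subset_union_quotient N
  refine ⟨hQ.antisymm fun p hp ↦ (hsplit (hX hp)).resolve_left fun h ↦
    Set.disjoint_left.mp hN h hp, Set.ext fun p ↦ ⟨fun h ↦ ?_, fun ⟨hp, hpX⟩ ↦ ?_⟩⟩
  · exact ⟨associatedPrimes.subset_of_injective N.injective_subtype h, Set.disjoint_left.mp hN h⟩
  · exact (hsplit hp).resolve_right fun h ↦ hpX (hQ h)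

theorem Submodule.colon_add_smul_eq {N : Submodule R M} {y u : M} {s : R}
    (hp : (N.colon {y}).IsPrime) (hu : u ∈ N) (hs : s ∉ N.colon {y}) :
    N.colon {u + s • y} = N.colon {y} := by
  ext r
  rw [mem_colon_singleton, smul_add, N.add_mem_iff_right (N.smul_mem r hu), smul_smul,
    ← mem_colon_singleton]
  exact ⟨fun h ↦ (hp.mem_or_mem h).resolve_right hs, fun h ↦ Ideal.mul_mem_right s _ h⟩

variable [IsNoetherianRing R]

theorem mem_associatedPrimes_quotient_iff {N : Submodule R M} {p : Ideal R} :
    p ∈ associatedPrimes R (M ⧸ N) ↔ p.IsPrime ∧ ∃ x : M, p = N.colon {x} := by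
  have hcolon (x : M) : (⊥ : Submodule R (M ⧸ N)).colon {N.mkQ x} = N.colon {x} := by
    ext r
    rw [mem_colon_singleton, mem_colon_singleton, mem_bot, ← map_smul, mkQ_apply,
      Quotient.mk_eq_zero]
  simp only [AssociatedPrimes.mem_iff, isAssociatedPrime_iff, N.mkQ_surjective.exists, hcolon]

theorem mem_associatedPrimes_submodule_iff {N : Submodule R M} {p : Ideal R} :
    p ∈ associatedPrimes R N ↔ p.IsPrime ∧ ∃ x ∈ N, p = (⊥ : Submodule R M).colon {x} := by
  have hcolon (x : N) : (⊥ : Submodule R N).colon {x} = (⊥ : Submodule R M).colon {(x : M)} := by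
    ext r
    simp only [mem_colon_singleton, mem_bot, ← coe_smul, ZeroMemClass.coe_eq_zero]
  simp only [AssociatedPrimes.mem_iff, isAssociatedPrime_iff, Subtype.exists, hcolon, exists_prop]

theorem associatedPrimes_sSup_subset {c : Set (Submodule R M)} (hc : c.Nonempty)
    (hdir : DirectedOn (· ≤ ·) c) :
    associatedPrimes R ↥(sSup c) ⊆ ⋃ N ∈ c, associatedPrimes R N := by
  intro p hp
  obtain ⟨hp, x, hx, rfl⟩ := mem_associatedPrimes_submodule_iff.mp hp
  obtain ⟨N, hN, hxN⟩ := (mem_sSup_of_directed hc hdir).mp hx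
  exact Set.mem_biUnion hN (mem_associatedPrimes_submodule_iff.mpr ⟨hp, x, hxN, rfl⟩)

theorem associatedPrimes_sup_span_singleton_subset {N : Submodule R M} {y : M}
    (hp : (N.colon {y}).IsPrime) :
    associatedPrimes R ↥(N ⊔ R ∙ y) ⊆ insert (N.colon {y}) (associatedPrimes R N) := by
  set N' := N ⊔ R ∙ y
  intro q hq
  rcases associatedPrimes_subset_union_quotient (N.comap N'.subtype) hq with hN | hQ
  · have hle : N ≤ N' := le_sup_left
    exact Or.inr (LinearEquiv.AssociatedPrimes.eq (comapSubtypeEquivOfLe hle) ▸ hN)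
  obtain ⟨hq, ⟨z, hz⟩, rfl⟩ := mem_associatedPrimes_quotient_iff.mp hQ
  have hcolon : (N.comap N'.subtype).colon {⟨z, hz⟩} = N.colon {z} := by
    ext r
    simp only [mem_colon_singleton, mem_comap, map_smul, subtype_apply]
  obtain ⟨u, hu, _, hw, rfl⟩ := mem_sup.mp hz
  obtain ⟨s, rfl⟩ := mem_span_singleton.mp hw
  rw [hcolon] at hq ⊢
  have hs : s ∉ N.colon {y} := fun hs ↦ hq.ne_top <|
    (colon_eq_top_iff_subset _).mpr (by simpa using N.add_mem hu (mem_colon_singleton.mp hs))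
  exact Or.inl (colon_add_smul_eq hp hu hs)

end AssociatedPrimes

section Homogeneous

variable {ι σ A M : Type*} [Semiring A] [AddCommMonoid M] [Module A M] [DecidableEq ι]
  [SetLike σ M] [AddSubmonoidClass σ M] (ℳ : ι → σ) [Decomposition ℳ]

theorem Submodule.mem_of_forall_decompose_mem {N : Submodule A M} {x : M}
    (h : ∀ i, (decompose ℳ x i : M) ∈ N) : x ∈ N := by
  classical
  rw [← sum_support_decompose ℳ x]
  exact N.sum_mem fun i _ ↦ h i

open scoped Classical in
noncomputable def Submodule.degreesOutside (N : Submodule A M) (x : M) : Finset ι :=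
  (decompose ℳ x).support.filter fun i ↦ (decompose ℳ x i : M) ∉ N

theorem Submodule.mem_degreesOutside {N : Submodule A M} {x : M} {i : ι} :
    i ∈ N.degreesOutside ℳ x ↔ (decompose ℳ x i : M) ∉ N := by
  simp only [degreesOutside, Finset.mem_filter, DFinsupp.mem_support_iff, and_iff_right_iff_imp]
  intro hi h0
  exact hi (by rw [h0, ZeroMemClass.coe_zero]; exact N.zero_mem)

theorem Submodule.IsHomogeneous.bot : (⊥ : Submodule A M).IsHomogeneous ℳ := by
  intro i m hm
  rw [(mem_bot A).mp hm, decompose_zero, DirectSum.zero_apply, ZeroMemClass.coe_zero]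
  exact zero_mem _

theorem Submodule.IsHomogeneous.sSup {c : Set (Submodule A M)}
    (hc : ∀ N ∈ c, N.IsHomogeneous ℳ) : (sSup c).IsHomogeneous ℳ := by
  intro i m hm
  rw [sSup_eq_iSup'] at hm ⊢
  refine Submodule.iSup_induction _ (motive := fun m ↦ (decompose ℳ m i : M) ∈ _) hm
    (fun N x hx ↦ mem_iSup_of_mem N (hc N N.2 i hx)) (by simp) fun x y hx hy ↦ ?_
  simpa only [decompose_add, DirectSum.add_apply, AddMemClass.coe_add] using add_mem hx hy

theorem Submodule.IsHomogeneous.sup {N N' : Submodule A M} (hN : N.IsHomogeneous ℳ)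
    (hN' : N'.IsHomogeneous ℳ) : (N ⊔ N').IsHomogeneous ℳ := by
  rw [← sSup_pair]
  exact .sSup ℳ (by rintro _ (rfl | rfl) <;> assumption)

end Homogeneous

theorem Ideal.isHomogeneous_of_forall_lowest_mem {R σ : Type*} [Ring R] [SetLike σ R]
    [AddSubgroupClass σ R] (𝒜 : ℕ → σ) [GradedRing 𝒜] {I : Ideal R}
    (h : ∀ a ∈ I, ∀ j₀, (∀ j < j₀, (decompose 𝒜 a j : R) = 0) → (decompose 𝒜 a j₀ : R) ∈ I) :
    I.IsHomogeneous 𝒜 := by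
  intro j
  induction j using Nat.strong_induction_on with | _ j ih => ?_
  intro a ha
  -- `a'` agrees with `a` in degrees `≥ j` and vanishes below `j`.
  set a' := a - ∑ k ∈ Finset.range j, (decompose 𝒜 a k : R)
  have ha' : a' ∈ I := I.sub_mem ha (I.sum_mem fun k hk ↦ ih k (Finset.mem_range.mp hk) ha)
  have hcomp (i : ℕ) : (decompose 𝒜 a' i : R) = if i < j then 0 else (decompose 𝒜 a i : R) := by
    have hk (k : ℕ) : (decompose 𝒜 (decompose 𝒜 a k : R) i : R) =
        if k = i then (decompose 𝒜 a i : R) else 0 := by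
      split_ifs with hki
      · exact hki ▸ decompose_of_mem_same 𝒜 (SetLike.coe_mem _)
      · exact decompose_of_mem_ne 𝒜 (SetLike.coe_mem _) hki
    simp only [a', ← GradedRing.proj_apply, map_sub, map_sum]
    simp only [GradedRing.proj_apply, hk, Finset.sum_ite_eq', Finset.mem_range]
    split_ifs <;> simp
  simpa [hcomp] using h a' ha' j fun i hi ↦ by simp [hcomp, hi]

section GradedModule

variable {R M : Type*} [CommRing R] [AddCommGroup M] [Module R M]

-- Not `SetLike.GradedSMul`: the degrees of `R` lie in `ℕ` and act on those of `M` through `ℕ → ℤ`.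
def IsGradedSMul (𝒜 : ℕ → AddSubgroup R) (ℳ : ℤ → AddSubgroup M) : Prop :=
  ∀ (i : ℕ) (j : ℤ) (r : R) (m : M), r ∈ 𝒜 i → m ∈ ℳ j → r • m ∈ ℳ ((i : ℤ) + j)

variable {𝒜 : ℕ → AddSubgroup R} {ℳ : ℤ → AddSubgroup M} [Decomposition ℳ]

theorem IsGradedSMul.coe_decompose_smul_of_mem (hsmul : IsGradedSMul 𝒜 ℳ) {j : ℕ} {b : R}
    (hb : b ∈ 𝒜 j) (m : M) (i : ℤ) :
    (decompose ℳ (b • m) (j + i) : M) = b • (decompose ℳ m i : M) := by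
  induction m using Decomposition.inductionOn ℳ with
  | zero => simp
  | @homogeneous k m =>
    have hbm := hsmul j k b m hb m.2
    by_cases hki : k = i
    · subst hki
      rw [decompose_of_mem_same ℳ hbm, decompose_of_mem_same ℳ m.2]
    · rw [decompose_of_mem_ne ℳ hbm (by omega), decompose_of_mem_ne ℳ m.2 hki, smul_zero]
  | add m m' hm hm' =>
    simp only [smul_add, decompose_add, DirectSum.add_apply, AddMemClass.coe_add, hm, hm']

open scoped Classical in
theorem IsGradedSMul.coe_decompose_smul [GradedRing 𝒜] (hsmul : IsGradedSMul 𝒜 ℳ) (a : R) (x : M)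
    (l : ℤ) :
    (decompose ℳ (a • x) l : M) =
      ∑ j ∈ (decompose 𝒜 a).support, (decompose 𝒜 a j : R) • (decompose ℳ x (l - j) : M) := by
  conv_lhs => rw [← sum_support_decompose 𝒜 a, Finset.sum_smul, decompose_sum]
  rw [DFinsupp.finsetSum_apply, AddSubmonoidClass.coe_finsetSum]
  refine Finset.sum_congr rfl fun j _ ↦ ?_
  rw [← hsmul.coe_decompose_smul_of_mem (decompose 𝒜 a j).2, add_sub_cancel]

theorem IsGradedSMul.smul_decompose_mem_of_smul_mem (hsmul : IsGradedSMul 𝒜 ℳ)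
    {N : Submodule R M} (hN : N.IsHomogeneous ℳ) {j : ℕ} {b : R} (hb : b ∈ 𝒜 j) {x : M}
    (h : b • x ∈ N) (i : ℤ) : b • (decompose ℳ x i : M) ∈ N :=
  hsmul.coe_decompose_smul_of_mem hb x i ▸ hN _ h

theorem IsGradedSMul.isHomogeneous_span_singleton [GradedRing 𝒜] (hsmul : IsGradedSMul 𝒜 ℳ)
    {d : ℤ} {y : M} (hy : y ∈ ℳ d) : (R ∙ y).IsHomogeneous ℳ := by
  have hcomp (k : ℤ) : (decompose ℳ y k : M) ∈ R ∙ y := by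
    by_cases hdk : d = k
    · rw [decompose_of_mem_same ℳ (hdk ▸ hy)]
      exact mem_span_singleton_self y
    · rw [decompose_of_mem_ne ℳ hy hdk]
      exact zero_mem _
  intro l m hm
  obtain ⟨r, rfl⟩ := mem_span_singleton.mp hm
  rw [hsmul.coe_decompose_smul]
  exact sum_mem fun j _ ↦ smul_mem _ _ (hcomp _)

theorem IsGradedSMul.smul_lowest_mem [GradedRing 𝒜] (hsmul : IsGradedSMul 𝒜 ℳ)
    {N : Submodule R M} (hN : N.IsHomogeneous ℳ) {a : R} {x : M} (hax : a • x ∈ N) {j₀ : ℕ}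
    (ha : ∀ j < j₀, (decompose 𝒜 a j : R) = 0) {i₀ : ℤ}
    (hx : ∀ i < i₀, (decompose ℳ x i : M) ∈ N) :
    (decompose 𝒜 a j₀ : R) • (decompose ℳ x i₀ : M) ∈ N := by
  classical
  -- The degree `j₀ + i₀` part of `a • x` is `aⱼ₀ • xᵢ₀` plus terms `aⱼ • xᵢ` with `i < i₀`.
  have hdeg := hN (j₀ + i₀) hax
  rw [hsmul.coe_decompose_smul] at hdeg
  by_cases hj₀ : j₀ ∈ (decompose 𝒜 a).support
  · rw [← Finset.add_sum_erase _ _ hj₀, add_sub_cancel_left] at hdeg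
    refine (N.add_mem_iff_left (N.sum_mem fun j hj ↦ ?_)).mp hdeg
    obtain ⟨hne, hj⟩ := Finset.mem_erase.mp hj
    have hlt : j₀ < j := (not_lt.mp fun h ↦ DFinsupp.mem_support_iff.mp hj
      (ZeroMemClass.coe_eq_zero.mp (ha j h))).lt_of_ne hne.symm
    exact N.smul_mem _ (hx _ (by omega))
  · rw [DFinsupp.notMem_support_iff.mp hj₀, ZeroMemClass.coe_zero, zero_smul]
    exact N.zero_mem

theorem IsGradedSMul.card_degreesOutside_smul_lt (hsmul : IsGradedSMul 𝒜 ℳ)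
    {N : Submodule R M} {j₀ : ℕ} {b : R} (hb : b ∈ 𝒜 j₀) {x : M} {i₀ : ℤ}
    (hi₀ : i₀ ∈ N.degreesOutside ℳ x) (hbx : b • (decompose ℳ x i₀ : M) ∈ N) :
    (N.degreesOutside ℳ (b • x)).card < (N.degreesOutside ℳ x).card := by
  refine (Finset.card_le_card_of_injOn (· - (j₀ : ℤ)) (fun l hl ↦ ?_)
    (sub_left_injective.injOn)).trans_lt (Finset.card_erase_lt_of_mem hi₀)
  have hl := (mem_degreesOutside ℳ).mp hl
  rw [← add_sub_cancel (j₀ : ℤ) l, hsmul.coe_decompose_smul_of_mem hb] at hl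
  exact Finset.mem_erase.mpr ⟨fun h : l - j₀ = i₀ ↦ hl (h ▸ hbx),
    (mem_degreesOutside ℳ).mpr fun h ↦ hl (N.smul_mem b h)⟩

theorem IsGradedSMul.exists_pow_lowest_smul_mem [GradedRing 𝒜] (hsmul : IsGradedSMul 𝒜 ℳ)
    {N : Submodule R M} (hN : N.IsHomogeneous ℳ) {a : R} {j₀ : ℕ}
    (ha : ∀ j < j₀, (decompose 𝒜 a j : R) = 0) {x : M} (hax : a • x ∈ N) :
    ∃ k : ℕ, (decompose 𝒜 a j₀ : R) ^ k • x ∈ N := by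
  set b := (decompose 𝒜 a j₀ : R)
  induction hn : (N.degreesOutside ℳ x).card using Nat.strong_induction_on generalizing x with
  | _ n ih =>
  rcases (N.degreesOutside ℳ x).eq_empty_or_nonempty with hempty | hne
  · refine ⟨0, (one_smul R x).symm ▸ mem_of_forall_decompose_mem ℳ fun i ↦ ?_⟩
    by_contra hi
    simpa [hempty] using (mem_degreesOutside ℳ).mpr hi
  set i₀ := (N.degreesOutside ℳ x).min' hne
  have hlow (i : ℤ) (hi : i < i₀) : (decompose ℳ x i : M) ∈ N := by
    by_contra h
    exact (Finset.min'_le _ _ (mem_degreesOutside ℳ |>.mpr h)).not_gt hi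
  have hbx := hsmul.smul_lowest_mem hN hax ha hlow
  obtain ⟨k, hk⟩ := ih _ (hn ▸ hsmul.card_degreesOutside_smul_lt (decompose 𝒜 a j₀).2
    (Finset.min'_mem _ hne) hbx) (by rw [smul_comm]; exact N.smul_mem b hax) rfl
  exact ⟨k + 1, by rwa [pow_succ, mul_smul]⟩

theorem IsGradedSMul.isHomogeneous_colon [GradedRing 𝒜] (hsmul : IsGradedSMul 𝒜 ℳ)
    {N : Submodule R M} (hN : N.IsHomogeneous ℳ) {x : M} (hp : (N.colon {x}).IsPrime) :
    (N.colon {x}).IsHomogeneous 𝒜 :=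
  Ideal.isHomogeneous_of_forall_lowest_mem 𝒜 fun a ha _ hlow ↦ by
    obtain ⟨k, hk⟩ := hsmul.exists_pow_lowest_smul_mem hN hlow (mem_colon_singleton.mp ha)
    exact hp.mem_of_pow_mem k (mem_colon_singleton.mpr hk)

theorem IsGradedSMul.exists_homogeneous_colon_eq [GradedRing 𝒜] (hsmul : IsGradedSMul 𝒜 ℳ)
    {N : Submodule R M} (hN : N.IsHomogeneous ℳ) {x : M} (hp : (N.colon {x}).IsPrime) :
    ∃ i, ∃ y ∈ ℳ i, N.colon {y} = N.colon {x} := by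
  classical
  -- `(N : x)` lies in every `(N : xᵢ)` and contains their intersection, so equals one of them.
  have hhom := hsmul.isHomogeneous_colon hN hp
  have hle (i : ℤ) : N.colon {x} ≤ N.colon {(decompose ℳ x i : M)} := fun r hr ↦ by
    rw [mem_colon_singleton, ← sum_support_decompose 𝒜 r, Finset.sum_smul]
    exact N.sum_mem fun j _ ↦ hsmul.smul_decompose_mem_of_smul_mem hN (decompose 𝒜 r j).2
      (mem_colon_singleton.mp (hhom j hr)) i
  have hinf : (decompose ℳ x).support.inf (fun i ↦ N.colon {(decompose ℳ x i : M)}) ≤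
      N.colon {x} := fun r hr ↦ by
    rw [mem_colon_singleton, ← sum_support_decompose ℳ x, Finset.smul_sum]
    exact N.sum_mem fun i hi ↦ mem_colon_singleton.mp
      (Finset.inf_le (f := fun i ↦ N.colon {(decompose ℳ x i : M)}) hi hr)
  obtain ⟨i, -, hi⟩ := hp.inf_le'.mp hinf
  exact ⟨i, _, (decompose ℳ x i).2, le_antisymm hi (hle i)⟩

theorem IsGradedSMul.associatedPrimes_quotient_subset_of_maximal [IsNoetherianRing R]
    [GradedRing 𝒜] (hsmul : IsGradedSMul 𝒜 ℳ) {X : Set (Ideal R)} {N : Submodule R M}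
    (hN : Maximal (fun N : Submodule R M ↦
      N.IsHomogeneous ℳ ∧ Disjoint (associatedPrimes R N) X) N) :
    associatedPrimes R (M ⧸ N) ⊆ X := by
  intro p hp
  by_contra hpX
  obtain ⟨hprime, x, rfl⟩ := mem_associatedPrimes_quotient_iff.mp hp
  obtain ⟨i, y, hy, hyx⟩ := hsmul.exists_homogeneous_colon_eq hN.prop.1 hprime
  rw [← hyx] at hprime hpX
  have hyN : y ∉ N := fun h ↦
    hprime.ne_top ((colon_eq_top_iff_subset _).mpr (Set.singleton_subset_iff.mpr h))
  have hdisj : Disjoint (associatedPrimes R ↥(N ⊔ R ∙ y)) X := by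
    refine Set.disjoint_left.mpr fun q hq ↦ ?_
    rcases associatedPrimes_sup_span_singleton_subset hprime hq with rfl | hqN
    · exact hpX
    · exact Set.disjoint_left.mp hN.prop.2 hqN
  have hN' := hN.eq_of_le ⟨hN.prop.1.sup ℳ (hsmul.isHomogeneous_span_singleton hy), hdisj⟩
    le_sup_left
  exact hyN (hN' ▸ mem_sup_right (mem_span_singleton_self y))

end GradedModule

/-- For a graded module `M` over a Noetherian graded commutative ring `R` and any subset `X` of
`Ass_R(M)`, there is a graded submodule `N` of `M` with `Ass_R(M/N) = X` and
`Ass_R(N) = Ass_R(M) \ X`. -/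
theorem stmt15 {R M : Type u} [CommRing R] [IsNoetherianRing R]
    (𝒜 : ℕ → AddSubgroup R) [GradedRing 𝒜]
    [AddCommGroup M] [Module R M]
    -- `M` is a `ℤ`-graded `R`-module:
    (ℳ : ℤ → AddSubgroup M) [DirectSum.Decomposition ℳ]
    (hsmul : ∀ (i : ℕ) (j : ℤ) (r : R) (m : M),
      r ∈ 𝒜 i → m ∈ ℳ j → r • m ∈ ℳ ((i : ℤ) + j))
    (X : Set (Ideal R)) (hX : X ⊆ associatedPrimes R M) :
    ∃ N : Submodule R M,
      -- `N` is a graded submodule: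
      (∀ m ∈ N, ∀ i : ℤ, ((DirectSum.decompose ℳ m i : ℳ i) : M) ∈ N) ∧
      associatedPrimes R (M ⧸ N) = X ∧
      associatedPrimes R N = associatedPrimes R M \ X := by
  set S := {N : Submodule R M | N.IsHomogeneous ℳ ∧ Disjoint (associatedPrimes R N) X}
  have hchain (c) (hcS : c ⊆ S) (hc : IsChain (· ≤ ·) c) (N) (hN : N ∈ c) :
      ∃ ub ∈ S, ∀ N' ∈ c, N' ≤ ub := by
    refine ⟨sSup c, ⟨.sSup ℳ fun N' hN' ↦ (hcS hN').1, Set.disjoint_left.mpr fun p hp hpX ↦ ?_⟩,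
      fun _ ↦ le_sSup⟩
    obtain ⟨N', hN', hpN'⟩ :=
      Set.mem_iUnion₂.mp (associatedPrimes_sSup_subset ⟨N, hN⟩ hc.directedOn hp)
    exact Set.disjoint_left.mp (hcS hN').2 hpN' hpX
  have hbot : ⊥ ∈ S := ⟨.bot ℳ, by simp [associatedPrimes.eq_empty_of_subsingleton]⟩
  obtain ⟨N, -, hN⟩ := zorn_le_nonempty₀ S hchain ⊥ hbot
  exact ⟨N, fun m hm i ↦ hN.prop.1 i hm, associatedPrimes_eq_of_disjoint_of_quotient_subset hX
    hN.prop.2 (IsGradedSMul.associatedPrimes_quotient_subset_of_maximal hsmul hN)⟩
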